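/- arXiv:2502.19967 — 6 statements merged into one kernel-verified Lean document; each statement's English description precedes it below -/
import Mathlib

section
/- For every MRDT implementation D, every reachable configuration C = (N,H,L,G,vis) of its transition system, and all versions v₁, v₂ ∈ dom(N): if v⊤ is a lowest common ancestor of v₁ and v₂ in G, then L(v⊤) = L(v₁) ∩ L(v₂). -/
/-- An MRDT implementation `D = (Σ, σ₀, do, merge, rc)`. -/
structure MRDT (T R O : Type) where
  State : Type
  init : State
  doOp : State → T → R → O → State
  merge : State → State → State → State
  rc : O → O → Prop

/-- An event is a triple `(t, r, o)`. -/
abbrev Event (T R O : Type) := T × R × O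

variable {T R O : Type}

/-- Applying an event to a state: `e(σ) = do σ t r o`. -/
def MRDT.applyEvent (D : MRDT T R O) (e : Event T R O) (σ : D.State) : D.State :=
  D.doOp σ e.1 e.2.1 e.2.2

/-- Applying a finite sequence of events to a state. -/
def MRDT.applySeq (D : MRDT T R O) (π : List (Event T R O)) (σ : D.State) : D.State :=
  π.foldl (fun s e => D.applyEvent e s) σ

/-- A configuration `C = (N, H, L, G, vis)`; versions are natural numbers. -/
structure Config (T R O S : Type) where
  N : ℕ → Option S
  H : R → Option ℕ
  L : ℕ → Finset (Event T R O)
  E : ℕ → ℕ → Prop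
  vis : Event T R O → Event T R O → Prop

/-- `E_C`: the set of events appearing at some version of `C`. -/
def Config.events {S : Type} (C : Config T R O S) : Set (Event T R O) :=
  {e | ∃ v, (C.N v).isSome ∧ e ∈ C.L v}

/-- `vt` is a lowest common ancestor of `v1` and `v2` in the graph with
vertex set `V` and edge relation `E`. -/
def isLCA (V : ℕ → Prop) (E : ℕ → ℕ → Prop) (v1 v2 vt : ℕ) : Prop :=
  V vt ∧ Relation.ReflTransGen E vt v1 ∧ Relation.ReflTransGen E vt v2 ∧
    ∀ v, V v → Relation.ReflTransGen E v v1 → Relation.ReflTransGen E v v2 →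
      Relation.ReflTransGen E v vt

variable [DecidableEq T] [DecidableEq R] [DecidableEq O]

/-- Result of a `CreateBranch` transition. -/
def branchConfig (D : MRDT T R O) (C : Config T R O D.State)
    (r' : R) (vr v : ℕ) (σ : D.State) : Config T R O D.State where
  N := Function.update C.N v (some σ)
  H := Function.update C.H r' (some v)
  L := Function.update C.L v (C.L vr)
  E := fun u w => C.E u w ∨ (u = vr ∧ w = v)
  vis := C.vis

/-- Result of an `Apply` transition. -/
def applyConfig (D : MRDT T R O) (C : Config T R O D.State)
    (t : T) (r : R) (o : O) (vr v : ℕ) (σ : D.State) : Config T R O D.State where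
  N := Function.update C.N v (some (D.applyEvent (t, r, o) σ))
  H := Function.update C.H r (some v)
  L := Function.update C.L v (insert (t, r, o) (C.L vr))
  E := fun u w => C.E u w ∨ (u = vr ∧ w = v)
  vis := fun e1 e2 => C.vis e1 e2 ∨ (e1 ∈ C.L vr ∧ e2 = (t, r, o))

/-- Result of a `Merge` transition. -/
def mergeConfig (D : MRDT T R O) (C : Config T R O D.State)
    (r1 : R) (v1 v2 vt v : ℕ) (σt σ1 σ2 : D.State) : Config T R O D.State where
  N := Function.update C.N v (some (D.merge σt σ1 σ2))
  H := Function.update C.H r1 (some v)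
  L := Function.update C.L v (C.L v1 ∪ C.L v2)
  E := fun u w => C.E u w ∨ ((u = v1 ∨ u = v2) ∧ w = v)
  vis := C.vis

/-- The transition relation of the replicated datastore. -/
inductive Step (D : MRDT T R O) : Config T R O D.State → Config T R O D.State → Prop
  | createBranch (C : Config T R O D.State) (r r' : R) (vr v : ℕ) (σ : D.State)
      (hr : C.H r = some vr) (hσ : C.N vr = some σ)
      (hr' : C.H r' = none) (hv : C.N v = none) :
      Step D C (branchConfig D C r' vr v σ)
  | applyOp (C : Config T R O D.State) (t : T) (r : R) (o : O) (vr v : ℕ) (σ : D.State)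
      (hr : C.H r = some vr) (hσ : C.N vr = some σ) (hv : C.N v = none)
      (ht : ∀ e' ∈ C.events, e'.1 ≠ t) :
      Step D C (applyConfig D C t r o vr v σ)
  | mergeOp (C : Config T R O D.State) (r1 r2 : R) (v1 v2 vt v : ℕ) (σ1 σ2 σt : D.State)
      (h1 : C.H r1 = some v1) (h2 : C.H r2 = some v2)
      (hσ1 : C.N v1 = some σ1) (hσ2 : C.N v2 = some σ2) (hσt : C.N vt = some σt)
      (hlca : isLCA (fun u => (C.N u).isSome) C.E v1 v2 vt)
      (hv : C.N v = none) :
      Step D C (mergeConfig D C r1 v1 v2 vt v σt σ1 σ2)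
  | queryOp (C : Config T R O D.State) : Step D C C

/-- The initial configuration, with a single replica `r0` and head version `0`. -/
def initConfig (D : MRDT T R O) (r0 : R) : Config T R O D.State where
  N := fun u => if u = 0 then some D.init else none
  H := fun r => if r = r0 then some 0 else none
  L := fun _ => ∅
  E := fun _ _ => False
  vis := fun _ _ => False

/-- A configuration is reachable if obtained from the initial configuration
by a finite sequence of transitions. -/
def Reachable (D : MRDT T R O) (C : Config T R O D.State) : Prop :=
  ∃ r0 : R, Relation.ReflTransGen (Step D) (initConfig D r0) C

/-- Events `e, e'` commute: `e(e'(σ)) = e'(e(σ))` for all states. -/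
def MRDT.Commute (D : MRDT T R O) (e e' : Event T R O) : Prop :=
  ∀ σ : D.State, D.applyEvent e (D.applyEvent e' σ) = D.applyEvent e' (D.applyEvent e σ)

/-- The linearization relation `lo_C` on `E_C`. -/
def lo (D : MRDT T R O) (C : Config T R O D.State) (e1 e2 : Event T R O) : Prop :=
  e1 ∈ C.events ∧ e2 ∈ C.events ∧
    ((C.vis e1 e2 ∧ ¬ D.Commute e1 e2) ∨
     (¬ C.vis e1 e2 ∧ ¬ C.vis e2 e1 ∧ D.rc e1.2.2 e2.2.2 ∧
       ¬ ∃ e3, e3 ∈ C.events ∧ C.vis e2 e3 ∧ ¬ D.Commute e2 e3))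

/-- `e` occurs strictly before `e'` in the list `π`. -/
def precedes (π : List (Event T R O)) (e e' : Event T R O) : Prop :=
  ∃ i j : ℕ, i < j ∧ π[i]? = some e ∧ π[j]? = some e'

/-- A configuration is RA-linearizable. -/
def RALinConfig (D : MRDT T R O) (C : Config T R O D.State) : Prop :=
  ∀ r vr, C.H r = some vr →
    ∃ π : List (Event T R O), π.Nodup ∧ (∀ e, e ∈ π ↔ e ∈ C.L vr) ∧
      (∀ e e', e ∈ C.L vr → e' ∈ C.L vr → lo D C e e' → precedes π e e') ∧
      C.N vr = some (D.applySeq π D.init)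

/-- `rc-non-comm`. -/
def RcNonComm (D : MRDT T R O) : Prop :=
  ∀ o1 o2 : O,
    (∃ e1 e2 : Event T R O, e1.2.2 = o1 ∧ e2.2.2 = o2 ∧ ¬ D.Commute e1 e2) ↔
      (D.rc o1 o2 ∨ D.rc o2 o1)

/-- `cond-comm`. -/
def CondComm (D : MRDT T R O) : Prop :=
  ∀ o1 o2 o3 : O, D.rc o1 o2 →
    (∃ e2 e3 : Event T R O, e2.2.2 = o2 ∧ e3.2.2 = o3 ∧ ¬ D.Commute e2 e3) →
    ∀ e1 e2 e3 : Event T R O, e1.2.2 = o1 → e2.2.2 = o2 → e3.2.2 = o3 →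
      ∀ (σ : D.State) (π : List (Event T R O)),
        D.applyEvent e3 (D.applySeq π (D.applyEvent e1 (D.applyEvent e2 σ))) =
          D.applyEvent e3 (D.applySeq π (D.applyEvent e2 (D.applyEvent e1 σ)))

/-- `no-rc-chain`. -/
def NoRcChain (D : MRDT T R O) : Prop :=
  ¬ ∃ o1 o2 o3 : O, D.rc o1 o2 ∧ D.rc o2 o3

/-- A list of events has pairwise distinct timestamps. -/
def Distinct (l : List (Event T R O)) : Prop :=
  l.Pairwise (fun e e' => e.1 ≠ e'.1)

section Aux

variable {T R O : Type} [DecidableEq T] [DecidableEq R] [DecidableEq O]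

def MRDTInv (D : MRDT T R O) (C : Config T R O D.State) : Prop :=
  (∀ u w, C.E u w → (C.N u).isSome ∧ (C.N w).isSome) ∧
  (∀ u w, C.E u w → C.L u ⊆ C.L w) ∧
  (∀ a b, (C.N a).isSome → (C.N b).isSome →
    ∀ e, e ∈ C.L a → e ∈ C.L b →
      ∃ u, (C.N u).isSome ∧ Relation.ReflTransGen C.E u a ∧
        Relation.ReflTransGen C.E u b ∧ e ∈ C.L u)

lemma mono_path (D : MRDT T R O) (C : Config T R O D.State)
    (h : ∀ u w, C.E u w → C.L u ⊆ C.L w) {u w : ℕ}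
    (p : Relation.ReflTransGen C.E u w) : C.L u ⊆ C.L w := by
  induction p with
  | refl => exact Finset.Subset.refl _
  | tail _ hstep ih => exact ih.trans (h _ _ hstep)

lemma update_inv (D : MRDT T R O) (C C' : Config T R O D.State)
    (v : ℕ) (s : D.State) (S : Finset (Event T R O)) (P : ℕ → Prop)
    (hN : C'.N = Function.update C.N v (some s))
    (hL : C'.L = Function.update C.L v S)
    (hE : C'.E = fun u w => C.E u w ∨ (P u ∧ w = v))
    (hv : C.N v = none)
    (hsrc : ∀ u, P u → (C.N u).isSome ∧ C.L u ⊆ S)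
    (hcov : ∀ e ∈ S, ∀ w, (C.N w).isSome → e ∈ C.L w → ∃ u, P u ∧ e ∈ C.L u)
    (hI : MRDTInv D C) : MRDTInv D C' := by
  obtain ⟨h1, h2, h3⟩ := hI
  have hne : ∀ u, (C.N u).isSome → u ≠ v := by
    intro u hu h; rw [h] at hu; rw [hv] at hu; simp at hu
  have hN' : ∀ u, u ≠ v → C'.N u = C.N u := by
    intro u hu; rw [hN, Function.update_of_ne hu]
  have hL' : ∀ u, u ≠ v → C'.L u = C.L u := by
    intro u hu; rw [hL, Function.update_of_ne hu]
  have hNv : (C'.N v).isSome := by rw [hN]; simp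
  have hLv : C'.L v = S := by rw [hL]; simp
  have hsome : ∀ u, (C.N u).isSome → (C'.N u).isSome := by
    intro u hu; rw [hN' u (hne u hu)]; exact hu
  have hmonoE : ∀ {a b : ℕ}, Relation.ReflTransGen C.E a b →
      Relation.ReflTransGen C'.E a b := by
    intro a b p
    refine Relation.ReflTransGen.mono ?_ a b p
    intro x y hxy; rw [hE]; exact Or.inl hxy
  refine ⟨?_, ?_, ?_⟩
  · intro u w huw
    rw [hE] at huw
    rcases huw with huw | ⟨hPu, rfl⟩
    · exact ⟨hsome _ (h1 u w huw).1, hsome _ (h1 u w huw).2⟩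
    · exact ⟨hsome _ (hsrc u hPu).1, hNv⟩
  · intro u w huw
    rw [hE] at huw
    rcases huw with huw | ⟨hPu, rfl⟩
    · rw [hL' u (hne u (h1 u w huw).1), hL' w (hne w (h1 u w huw).2)]
      exact h2 u w huw
    · rw [hL' u (hne u (hsrc u hPu).1), hLv]
      exact (hsrc u hPu).2
  · intro a b ha hb e hea heb
    by_cases hav : a = v
    · rw [hav] at ha hea ⊢
      by_cases hbv : b = v
      · rw [hbv] at hb heb ⊢
        exact ⟨v, ha, Relation.ReflTransGen.refl, Relation.ReflTransGen.refl, hea⟩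
      · have hb' : (C.N b).isSome := by rw [← hN' b hbv]; exact hb
        rw [hLv] at hea
        rw [hL' b hbv] at heb
        obtain ⟨u0, hPu0, heu0⟩ := hcov e hea b hb' heb
        obtain ⟨u, hu, p1, p2, heu⟩ := h3 u0 b (hsrc u0 hPu0).1 hb' e heu0 heb
        refine ⟨u, hsome u hu, ?_, hmonoE p2, ?_⟩
        · exact (hmonoE p1).tail (by rw [hE]; exact Or.inr ⟨hPu0, rfl⟩)
        · rw [hL' u (hne u hu)]; exact heu
    · by_cases hbv : b = v
      · rw [hbv] at hb heb ⊢
        have ha' : (C.N a).isSome := by rw [← hN' a hav]; exact ha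
        rw [hLv] at heb
        rw [hL' a hav] at hea
        obtain ⟨u0, hPu0, heu0⟩ := hcov e heb a ha' hea
        obtain ⟨u, hu, p1, p2, heu⟩ := h3 u0 a (hsrc u0 hPu0).1 ha' e heu0 hea
        refine ⟨u, hsome u hu, hmonoE p2, ?_, ?_⟩
        · exact (hmonoE p1).tail (by rw [hE]; exact Or.inr ⟨hPu0, rfl⟩)
        · rw [hL' u (hne u hu)]; exact heu
      · have ha' : (C.N a).isSome := by rw [← hN' a hav]; exact ha
        have hb' : (C.N b).isSome := by rw [← hN' b hbv]; exact hb
        rw [hL' a hav] at hea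
        rw [hL' b hbv] at heb
        obtain ⟨u, hu, p1, p2, heu⟩ := h3 a b ha' hb' e hea heb
        exact ⟨u, hsome u hu, hmonoE p1, hmonoE p2, by rw [hL' u (hne u hu)]; exact heu⟩

lemma step_inv (D : MRDT T R O) {C C' : Config T R O D.State}
    (hs : Step D C C') (hI : MRDTInv D C) : MRDTInv D C' := by
  cases hs with
  | createBranch r r' vr v σ hr hσ hr' hv =>
    refine update_inv D C _ v σ (C.L vr) (fun u => u = vr) rfl rfl rfl hv ?_ ?_ hI
    · rintro u rfl; exact ⟨by rw [hσ]; rfl, Finset.Subset.refl _⟩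
    · intro e he w _ _; exact ⟨vr, rfl, he⟩
  | applyOp t r o vr v σ hr hσ hv ht =>
    refine update_inv D C _ v (D.applyEvent (t, r, o) σ) (insert (t, r, o) (C.L vr))
      (fun u => u = vr) rfl rfl rfl hv ?_ ?_ hI
    · rintro u rfl; exact ⟨by rw [hσ]; rfl, Finset.subset_insert _ _⟩
    · intro e he w hw hew
      rw [Finset.mem_insert] at he
      rcases he with rfl | he
      · exact absurd rfl (ht _ ⟨w, hw, hew⟩)
      · exact ⟨vr, rfl, he⟩
  | mergeOp r1 r2 w1 w2 wt v σ1 σ2 σt hh1 hh2 hσ1 hσ2 hσt hlca hv =>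
    refine update_inv D C _ v (D.merge σt σ1 σ2) (C.L w1 ∪ C.L w2)
      (fun u => u = w1 ∨ u = w2) rfl rfl rfl hv ?_ ?_ hI
    · rintro u (rfl | rfl)
      · exact ⟨by rw [hσ1]; rfl, Finset.subset_union_left⟩
      · exact ⟨by rw [hσ2]; rfl, Finset.subset_union_right⟩
    · intro e he w _ _
      rw [Finset.mem_union] at he
      rcases he with he | he
      · exact ⟨w1, Or.inl rfl, he⟩
      · exact ⟨w2, Or.inr rfl, he⟩
  | queryOp => exact hI

lemma reachable_inv (D : MRDT T R O) (C : Config T R O D.State)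
    (hC : Reachable D C) : MRDTInv D C := by
  obtain ⟨r0, hsteps⟩ := hC
  induction hsteps with
  | refl =>
    refine ⟨?_, ?_, ?_⟩
    · intro u w h; exact h.elim
    · intro u w h; exact h.elim
    · intro a b _ _ e he _; simp [initConfig] at he
  | tail _ hstep ih => exact step_inv D hstep ih

end Aux

/-- for any reachable configuration, the event set of an LCA of two
versions is the intersection of the event sets of the two versions. -/
theorem lca_events (T R O : Type) [DecidableEq T] [DecidableEq R] [DecidableEq O]
    (D : MRDT T R O) (C : Config T R O D.State) (hC : Reachable D C)
    (v1 v2 vt : ℕ) (h1 : (C.N v1).isSome) (h2 : (C.N v2).isSome)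
    (hlca : isLCA (fun u => (C.N u).isSome) C.E v1 v2 vt) :
    C.L vt = C.L v1 ∩ C.L v2 := by
  obtain ⟨hi1, hi2, hi3⟩ := reachable_inv D C hC
  obtain ⟨hvt, p1, p2, hmin⟩ := hlca
  apply Finset.Subset.antisymm
  · intro e he
    rw [Finset.mem_inter]
    exact ⟨mono_path D C hi2 p1 he, mono_path D C hi2 p2 he⟩
  · intro e he
    rw [Finset.mem_inter] at he
    obtain ⟨u, hu, q1, q2, heu⟩ := hi3 v1 v2 h1 h2 e he.1 he.2
    exact mono_path D C hi2 (hmin u hu q1 q2) heu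
end

section
/- For every MRDT implementation D and every reachable configuration C = (N,H,L,G,vis): every event e ∈ E_C has exactly one generator version, and for every version v ∈ dom(N) with e ∈ L(v), the generator version w of e satisfies (w,v) ∈ E*. -/
variable {T R O : Type}

variable [DecidableEq T] [DecidableEq R] [DecidableEq O]

/-- `w` is a generator version of the event `e` in configuration `C`:
`w` has exactly one incoming edge `(u, w)`, `e ∉ L(u)` and `e ∈ L(w)`. -/
def IsGenerator {S : Type} (C : Config T R O S) (e : Event T R O) (w : ℕ) : Prop :=
  (C.N w).isSome ∧
    (∃ u, C.E u w ∧ (∀ u', C.E u' w → u' = u) ∧ e ∉ C.L u) ∧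
    e ∈ C.L w

section Aux

variable {S : Type}

/-- The inductive invariant: edges connect existing versions, and every event has a
unique generator version which is an ancestor of every version containing it. -/
def GenInv (C : Config T R O S) : Prop :=
  (∀ u w, C.E u w → (C.N u).isSome ∧ (C.N w).isSome) ∧
  ∀ e ∈ C.events, (∃! w, IsGenerator C e w) ∧
    ∀ v, (C.N v).isSome → e ∈ C.L v → ∀ w, IsGenerator C e w →
      Relation.ReflTransGen C.E w v

lemma inv_ext (C C' : Config T R O S) (hI : GenInv C) (v : ℕ) (hv : C.N v = none)
    (σ : S) (Sev : Finset (Event T R O)) (P : ℕ → Prop)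
    (hP : ∀ p, P p → (C.N p).isSome)
    (hN : C'.N = Function.update C.N v (some σ))
    (hL : C'.L = Function.update C.L v Sev)
    (hE : ∀ u w, C'.E u w ↔ C.E u w ∨ (P u ∧ w = v))
    (hS : ∀ e ∈ Sev,
      (e ∈ C.events ∧ (∀ u, P u → (∀ u', P u' → u' = u) → e ∈ C.L u) ∧
        ∀ w, IsGenerator C e w → ∃ p, P p ∧ Relation.ReflTransGen C.E w p)
      ∨ ((∀ v', (C.N v').isSome → e ∉ C.L v') ∧
          ∃ u, P u ∧ (∀ u', P u' → u' = u) ∧ e ∉ C.L u)) :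
    GenInv C' := by
  have hne : ∀ u, (C.N u).isSome → u ≠ v := by
    rintro u hu rfl; rw [hv] at hu; simp at hu
  have hNv' : ∀ v', v' ≠ v → C'.N v' = C.N v' := by
    intro v' h; rw [hN, Function.update_of_ne h]
  have hNv : C'.N v = some σ := by rw [hN]; simp
  have hLv' : ∀ v', v' ≠ v → C'.L v' = C.L v' := by
    intro v' h; rw [hL, Function.update_of_ne h]
  have hLv : C'.L v = Sev := by rw [hL]; simp
  have hE' : ∀ u w, w ≠ v → (C'.E u w ↔ C.E u w) := by
    intro u w hw; rw [hE]
    constructor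
    · rintro (h | ⟨_, rfl⟩)
      · exact h
      · exact absurd rfl hw
    · exact Or.inl
  have hEv : ∀ u, C'.E u v ↔ P u := by
    intro u; rw [hE]
    constructor
    · rintro (h | ⟨h, _⟩)
      · have h2 := (hI.1 u v h).2
        rw [hv] at h2
        simp at h2
      · exact h
    · exact fun h => Or.inr ⟨h, rfl⟩
  have hmono : ∀ a b, Relation.ReflTransGen C.E a b → Relation.ReflTransGen C'.E a b :=
    fun a b h => Relation.ReflTransGen.mono (fun x y hxy => (hE x y).2 (Or.inl hxy)) a b h
  have genT : ∀ e w, w ≠ v → (IsGenerator C' e w ↔ IsGenerator C e w) := by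
    intro e w hw
    constructor
    · rintro ⟨hs, ⟨u, hu, huniq, hnl⟩, hmem⟩
      have hu' : C.E u w := (hE' u w hw).1 hu
      have huv : u ≠ v := hne u (hI.1 u w hu').1
      refine ⟨by rwa [hNv' w hw] at hs, ⟨u, hu', ?_, by rwa [hLv' u huv] at hnl⟩,
        by rwa [hLv' w hw] at hmem⟩
      intro u' h; exact huniq u' ((hE' u' w hw).2 h)
    · rintro ⟨hs, ⟨u, hu, huniq, hnl⟩, hmem⟩
      have huv : u ≠ v := hne u (hI.1 u w hu).1
      refine ⟨by rw [hNv' w hw]; exact hs, ⟨u, (hE' u w hw).2 hu, ?_, by rwa [hLv' u huv]⟩,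
        by rwa [hLv' w hw]⟩
      intro u' h; exact huniq u' ((hE' u' w hw).1 h)
  have genV : ∀ e, IsGenerator C' e v ↔
      (e ∈ Sev ∧ ∃ u, P u ∧ (∀ u', P u' → u' = u) ∧ e ∉ C.L u) := by
    intro e
    constructor
    · rintro ⟨_, ⟨u, hu, huniq, hnl⟩, hmem⟩
      have hu' : P u := (hEv u).1 hu
      have huv : u ≠ v := hne u (hP u hu')
      refine ⟨by rwa [hLv] at hmem, u, hu', ?_, by rwa [hLv' u huv] at hnl⟩
      intro u' h; exact huniq u' ((hEv u').2 h)
    · rintro ⟨hmem, u, hu, huniq, hnl⟩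
      have huv : u ≠ v := hne u (hP u hu)
      refine ⟨by rw [hNv]; rfl, ⟨u, (hEv u).2 hu, ?_, by rwa [hLv' u huv]⟩,
        by rwa [hLv]⟩
      intro u' h; exact huniq u' ((hEv u').1 h)
  constructor
  · intro u w h
    rcases (hE u w).1 h with h' | ⟨hu, rfl⟩
    · obtain ⟨h1, h2⟩ := hI.1 u w h'
      exact ⟨by rw [hNv' u (hne u h1)]; exact h1, by rw [hNv' w (hne w h2)]; exact h2⟩
    · exact ⟨by rw [hNv' u (hne u (hP u hu))]; exact hP u hu, by rw [hNv]; rfl⟩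
  · intro e he
    obtain ⟨v', hv', hmem'⟩ := he
    have hec' : e ∈ C.events ∨ e ∈ Sev := by
      by_cases h : v' = v
      · subst h; exact Or.inr (by rwa [hLv] at hmem')
      · exact Or.inl ⟨v', by rwa [hNv' v' h] at hv', by rwa [hLv' v' h] at hmem'⟩
    by_cases hec : e ∈ C.events
    · obtain ⟨⟨w₀, hw₀, huniq⟩, hanc⟩ := hI.2 e hec
      have hw₀v : w₀ ≠ v := hne w₀ hw₀.1
      have hnotv : ¬ IsGenerator C' e v := by
        rw [genV]; rintro ⟨hmemS, u, hu, hun, hnl⟩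
        rcases hS e hmemS with ⟨_, h2, _⟩ | ⟨hnot, _⟩
        · exact hnl (h2 u hu hun)
        · obtain ⟨v'', a, b⟩ := hec; exact hnot v'' a b
      refine ⟨⟨w₀, (genT e w₀ hw₀v).2 hw₀, ?_⟩, ?_⟩
      · intro w' hw'
        have hwv : w' ≠ v := by rintro rfl; exact hnotv hw'
        exact huniq w' ((genT e w' hwv).1 hw')
      · intro v'' hv'' hmem w hw
        have hwv : w ≠ v := by rintro rfl; exact hnotv hw
        have hwC := (genT e w hwv).1 hw
        by_cases hveq : v'' = v
        · subst hveq
          have hmemS : e ∈ Sev := by rwa [hLv] at hmem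
          rcases hS e hmemS with ⟨_, _, h3⟩ | ⟨hnot, _⟩
          · obtain ⟨p, hp, hrtg⟩ := h3 w hwC
            exact (hmono _ _ hrtg).tail ((hEv p).2 hp)
          · obtain ⟨v₃, a, b⟩ := hec; exact absurd b (hnot v₃ a)
        · exact hmono _ _ (hanc v'' (by rwa [hNv' v'' hveq] at hv'')
            (by rwa [hLv' v'' hveq] at hmem) w hwC)
    · have hmemS : e ∈ Sev := hec'.resolve_left hec
      rcases hS e hmemS with ⟨h1, _⟩ | ⟨hnot, u, hu, hun, hnl⟩
      · exact absurd h1 hec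
      have hgenv : IsGenerator C' e v := (genV e).2 ⟨hmemS, u, hu, hun, hnl⟩
      refine ⟨⟨v, hgenv, ?_⟩, ?_⟩
      · intro w' hw'
        by_contra hne'
        have h' := (genT e w' hne').1 hw'
        exact hnot w' h'.1 h'.2.2
      · intro v'' hv'' hmem w hw
        have hwv : w = v := by
          by_contra h
          have h' := (genT e w h).1 hw
          exact hnot w h'.1 h'.2.2
        have hveq : v'' = v := by
          by_contra h
          exact hnot v'' (by rwa [hNv' v'' h] at hv'') (by rwa [hLv' v'' h] at hmem)
        rw [hwv, hveq]

lemma inv_step (D : MRDT T R O) (C C' : Config T R O D.State)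
    (h : Step D C C') (hI : GenInv C) : GenInv C' := by
  cases h with
  | createBranch r r' vr v σ hr hσ hr' hv =>
    refine inv_ext C _ hI v hv σ (C.L vr) (· = vr) ?_ rfl rfl (fun u w => Iff.rfl) ?_
    · rintro p rfl; rw [hσ]; rfl
    · intro e he
      have hevr : e ∈ C.events := ⟨vr, by rw [hσ]; rfl, he⟩
      refine Or.inl ⟨hevr, ?_, ?_⟩
      · rintro u rfl _; exact he
      · intro w hw
        exact ⟨vr, rfl, (hI.2 e hevr).2 vr (by rw [hσ]; rfl) he w hw⟩
  | applyOp t r o vr v σ hr hσ hv ht =>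
    refine inv_ext C _ hI v hv (D.applyEvent (t, r, o) σ) (insert (t, r, o) (C.L vr))
      (· = vr) ?_ rfl rfl (fun u w => Iff.rfl) ?_
    · rintro p rfl; rw [hσ]; rfl
    · intro e he
      by_cases hevr : e ∈ C.L vr
      · have hev : e ∈ C.events := ⟨vr, by rw [hσ]; rfl, hevr⟩
        refine Or.inl ⟨hev, ?_, ?_⟩
        · rintro u rfl _; exact hevr
        · intro w hw
          exact ⟨vr, rfl, (hI.2 e hev).2 vr (by rw [hσ]; rfl) hevr w hw⟩
      · have he0 : e = (t, r, o) :=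
          (Finset.mem_insert.1 he).resolve_right hevr
        refine Or.inr ⟨?_, vr, rfl, fun u' hu' => hu', hevr⟩
        intro v' hv' hmem
        exact ht e ⟨v', hv', hmem⟩ (by rw [he0])
  | mergeOp r1 r2 v1 v2 vt v σ1 σ2 σt h1 h2 hσ1 hσ2 hσt hlca hv =>
    refine inv_ext C _ hI v hv (D.merge σt σ1 σ2) (C.L v1 ∪ C.L v2)
      (fun u => u = v1 ∨ u = v2) ?_ rfl rfl (fun u w => Iff.rfl) ?_
    · rintro p (rfl | rfl)
      · rw [hσ1]; rfl
      · rw [hσ2]; rfl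
    · intro e he
      rcases Finset.mem_union.1 he with hm | hm
      · have hev : e ∈ C.events := ⟨v1, by rw [hσ1]; rfl, hm⟩
        refine Or.inl ⟨hev, ?_, ?_⟩
        · intro u _ hun
          have := hun v1 (Or.inl rfl); subst this; exact hm
        · intro w hw
          exact ⟨v1, Or.inl rfl, (hI.2 e hev).2 v1 (by rw [hσ1]; rfl) hm w hw⟩
      · have hev : e ∈ C.events := ⟨v2, by rw [hσ2]; rfl, hm⟩
        refine Or.inl ⟨hev, ?_, ?_⟩
        · intro u _ hun
          have := hun v2 (Or.inr rfl); subst this; exact hm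
        · intro w hw
          exact ⟨v2, Or.inr rfl, (hI.2 e hev).2 v2 (by rw [hσ2]; rfl) hm w hw⟩
  | queryOp => exact hI

lemma inv_init (D : MRDT T R O) (r0 : R) : GenInv (initConfig D r0) := by
  constructor
  · intro u w h; exact h.elim
  · rintro e ⟨v, _, hm⟩
    exact absurd hm (Finset.notMem_empty e)

end Aux

/-- every event of a reachable configuration has exactly one generator
version, and the generator version is an ancestor of every version containing the
event. -/
theorem generator_version (T R O : Type) [DecidableEq T] [DecidableEq R] [DecidableEq O]
    (D : MRDT T R O) (C : Config T R O D.State) (hC : Reachable D C) :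
    ∀ e ∈ C.events,
      (∃! w, IsGenerator C e w) ∧
        ∀ v, (C.N v).isSome → e ∈ C.L v →
          ∀ w, IsGenerator C e w → Relation.ReflTransGen C.E w v := by
  obtain ⟨r0, hsteps⟩ := hC
  have hInv : GenInv C := by
    induction hsteps with
    | refl => exact inv_init D r0
    | tail _ hstep ih => exact inv_step D _ _ hstep ih
  exact fun e he => hInv.2 e he
end

section
/- Let D be an MRDT implementation satisfying rc-non-comm and cond-comm. Then for every reachable configuration C of the transition system of D and any two sequences π₁ and π₂ that each enumerate E_C exactly once and extend lo_C, π₁(σ) = π₂(σ) for every state σ ∈ Σ. -/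
variable {T R O : Type}

variable [DecidableEq T] [DecidableEq R] [DecidableEq O]

section ListHelpers
variable {α : Type*}

theorem myslist_of_idx {l : List α} {x y : α} {i j : ℕ} (hij : i < j)
    (hi : l[i]? = some x) (hj : l[j]? = some y) : [x, y].Sublist l := by
  obtain ⟨hjl, hy⟩ := List.getElem?_eq_some_iff.mp hj
  have hx : x ∈ l.take j := by
    refine List.mem_of_getElem? (i := i) ?_
    rw [List.getElem?_take]; simp [hij, hi]
  have hd : l.drop j = y :: l.drop (j + 1) := by
    rw [List.drop_eq_getElem_cons hjl, hy]
  have h2 : [y].Sublist (l.drop j) := by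
    rw [hd]; exact (List.nil_sublist _).cons₂ y
  have := (List.singleton_sublist.mpr hx).append h2
  rwa [List.take_append_drop] at this

theorem myerase_mid [DecidableEq α] {u v : List α} {a x y : α} (hx : x ≠ a) (hy : y ≠ a)
    (h : [x, y].Sublist (u ++ a :: v)) : [x, y].Sublist (u ++ v) := by
  have h2 := h.filter (fun z => decide (z ≠ a))
  have h3 : List.filter (fun z => decide (z ≠ a)) [x, y] = [x, y] := by
    simp [List.filter_cons, hx, hy]
  have h4 : List.filter (fun z => decide (z ≠ a)) (u ++ a :: v)
      = List.filter (fun z => decide (z ≠ a)) u ++ List.filter (fun z => decide (z ≠ a)) v := by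
    rw [List.filter_append, List.filter_cons]; simp
  rw [h3, h4] at h2
  exact h2.trans ((List.filter_sublist (l := u)).append (List.filter_sublist (l := v)))

theorem mynotmem (hnd : (u ++ x :: v).Nodup) : x ∉ u ∧ x ∉ v ∧ (u ++ v).Nodup := by
  have := List.nodup_middle.mp hnd
  simp only [List.nodup_cons, List.mem_append] at this
  exact ⟨fun h => this.1 (Or.inl h), fun h => this.1 (Or.inr h), this.2⟩

theorem mymem_right {u v : List α} {x y : α} (hnd : (u ++ x :: v).Nodup)
    (h : [x, y].Sublist (u ++ x :: v)) : y ∈ v := by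
  obtain ⟨hxu, hxv, -⟩ := mynotmem hnd
  rcases List.sublist_append_iff.mp h with ⟨l1, l2, heq, h1, h2⟩
  match l1, heq with
  | [], heq =>
    rw [List.nil_append] at heq; subst heq
    cases h2 with
    | cons a h' => exact absurd (h'.subset (by simp)) hxv
    | cons_cons a h' => exact List.singleton_sublist.mp h'
  | [z], heq =>
    simp only [List.cons_append, List.nil_append, List.cons.injEq] at heq
    obtain ⟨rfl, rfl⟩ := heq
    exact absurd (h1.subset (by simp)) hxu
  | [z, w], heq =>
    simp only [List.cons_append, List.nil_append, List.cons.injEq] at heq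
    obtain ⟨rfl, rfl, rfl⟩ := heq
    exact absurd (h1.subset (by simp)) hxu
  | z :: w :: s :: t, heq => simp at heq

theorem mymem_left {u v : List α} {x y : α} (hnd : (u ++ x :: v).Nodup)
    (h : [y, x].Sublist (u ++ x :: v)) : y ∈ u := by
  obtain ⟨hxu, hxv, -⟩ := mynotmem hnd
  rcases List.sublist_append_iff.mp h with ⟨l1, l2, heq, h1, h2⟩
  match l1, heq with
  | [], heq =>
    rw [List.nil_append] at heq; subst heq
    cases h2 with
    | cons a h' => exact absurd (h'.subset (by simp)) hxv
    | cons_cons a h' => exact absurd (h'.subset (by simp)) hxv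
  | [z], heq =>
    simp only [List.cons_append, List.nil_append, List.cons.injEq] at heq
    obtain ⟨rfl, rfl⟩ := heq
    exact List.singleton_sublist.mp h1
  | [z, w], heq =>
    simp only [List.cons_append, List.nil_append, List.cons.injEq] at heq
    obtain ⟨rfl, rfl, rfl⟩ := heq
    exact h1.subset (by simp)
  | z :: w :: s :: t, heq => simp at heq

end ListHelpers

section ConvHelpers
variable {T R O : Type} [DecidableEq T] [DecidableEq R] [DecidableEq O]
variable (D : MRDT T R O) (C : Config T R O D.State)

theorem mysublist_of_precedes {l : List (Event T R O)} {x y : Event T R O}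
    (h : precedes l x y) : [x, y].Sublist l := by
  obtain ⟨i, j, hij, hi, hj⟩ := h
  exact myslist_of_idx hij hi hj

theorem myprecedes_of_sublist {l : List (Event T R O)} {x y : Event T R O}
    (h : [x, y].Sublist l) : precedes l x y := by
  induction l with
  | nil => simp at h
  | cons b l ih =>
    cases h with
    | cons a h' =>
      obtain ⟨i, j, hij, hi, hj⟩ := ih h'
      exact ⟨i + 1, j + 1, by omega, by simpa, by simpa⟩
    | cons_cons a h' =>
      obtain ⟨j, hj⟩ := List.getElem?_of_mem (List.singleton_sublist.mp h')
      exact ⟨0, j + 1, Nat.succ_pos j, by simp, by simpa⟩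

theorem mycommute_symm {e e' : Event T R O} (h : D.Commute e e') : D.Commute e' e :=
  fun σ => (h σ).symm

theorem myapplySeq_nil (σ : D.State) : D.applySeq [] σ = σ := rfl

theorem myapplySeq_cons (e : Event T R O) (l : List (Event T R O)) (σ : D.State) :
    D.applySeq (e :: l) σ = D.applySeq l (D.applyEvent e σ) := rfl

theorem myapplySeq_append (l1 l2 : List (Event T R O)) (σ : D.State) :
    D.applySeq (l1 ++ l2) σ = D.applySeq l2 (D.applySeq l1 σ) := by
  simp [MRDT.applySeq, List.foldl_append]

theorem pair_erase (hnc : RcNonComm D) (hcc : CondComm D)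
    {e a : Event T R O} (he : e ∈ C.events) (ha : a ∈ C.events)
    (h1 : ¬ lo D C e a) (h2 : ¬ lo D C a e)
    (y : List (Event T R O))
    (hy : ∀ e3 ∈ C.events,
      (C.vis a e3 ∧ ¬ D.Commute a e3) ∨ (C.vis e e3 ∧ ¬ D.Commute e e3) → e3 ∈ y)
    (σ : D.State) :
    D.applySeq y (D.applyEvent a (D.applyEvent e σ)) =
      D.applySeq y (D.applyEvent e (D.applyEvent a σ)) := by
  by_cases hc : D.Commute e a
  · rw [hc σ]
  · have hca : ¬ D.Commute a e := fun h => hc (mycommute_symm D h)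
    have hvea : ¬ C.vis e a := fun hv => h1 ⟨he, ha, Or.inl ⟨hv, hc⟩⟩
    have hvae : ¬ C.vis a e := fun hv => h2 ⟨ha, he, Or.inl ⟨hv, hca⟩⟩
    rcases (hnc e.2.2 a.2.2).mp ⟨e, a, rfl, rfl, hc⟩ with hrc | hrc
    · have hex : ∃ e3, e3 ∈ C.events ∧ C.vis a e3 ∧ ¬ D.Commute a e3 := by
        by_contra hne
        exact h1 ⟨he, ha, Or.inr ⟨hvea, hvae, hrc, hne⟩⟩
      obtain ⟨e3, he3, hv3, hc3⟩ := hex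
      obtain ⟨mid, tail, rfl⟩ := List.append_of_mem (hy e3 he3 (Or.inl ⟨hv3, hc3⟩))
      have key := hcc e.2.2 a.2.2 e3.2.2 hrc ⟨a, e3, rfl, rfl, hc3⟩ e a e3 rfl rfl rfl σ mid
      rw [myapplySeq_append, myapplySeq_append, myapplySeq_cons, myapplySeq_cons, key]
    · have hex : ∃ e3, e3 ∈ C.events ∧ C.vis e e3 ∧ ¬ D.Commute e e3 := by
        by_contra hne
        exact h2 ⟨ha, he, Or.inr ⟨hvae, hvea, hrc, hne⟩⟩
      obtain ⟨e3, he3, hv3, hc3⟩ := hex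
      obtain ⟨mid, tail, rfl⟩ := List.append_of_mem (hy e3 he3 (Or.inr ⟨hv3, hc3⟩))
      have key := hcc a.2.2 e.2.2 e3.2.2 hrc ⟨e, e3, rfl, rfl, hc3⟩ a e e3 rfl rfl rfl σ mid
      rw [myapplySeq_append, myapplySeq_append, myapplySeq_cons, myapplySeq_cons, key]

theorem mybubble (hnc : RcNonComm D) (hcc : CondComm D)
    {a : Event T R O} (ha : a ∈ C.events) :
    ∀ pre post (σ : D.State), (pre ++ post).Nodup →
    (∀ e ∈ pre, e ∈ C.events ∧ ¬ lo D C e a ∧ ¬ lo D C a e) →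
    (∀ e3 ∈ C.events, C.vis a e3 → ¬ D.Commute a e3 → e3 ∈ post) →
    (∀ x ∈ pre, ∀ e3 ∈ C.events, C.vis x e3 → ¬ D.Commute x e3 →
      [x, e3].Sublist (pre ++ post)) →
    D.applySeq (pre ++ a :: post) σ = D.applySeq (pre ++ post) (D.applyEvent a σ) := by
  intro pre
  induction pre using List.reverseRecOn with
  | nil => intro post σ _ _ _ _; rfl
  | append_singleton u e ih =>
    intro post σ hnd hpre hpost hinv
    have hnd' : (u ++ e :: post).Nodup := by simpa using hnd
    obtain ⟨hee, hloea, hloae⟩ := hpre e (by simp)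
    have hswap : ∀ σ' : D.State, D.applySeq post (D.applyEvent a (D.applyEvent e σ')) =
        D.applySeq post (D.applyEvent e (D.applyEvent a σ')) := by
      intro σ'
      refine pair_erase D C hnc hcc hee ha hloea hloae post ?_ σ'
      intro e3 he3 hcase
      rcases hcase with ⟨hv3, hc3⟩ | ⟨hv3, hc3⟩
      · exact hpost e3 he3 hv3 hc3
      · have hs : [e, e3].Sublist (u ++ e :: post) := by
          simpa using hinv e (by simp) e3 he3 hv3 hc3
        exact mymem_right hnd' hs
    have ihh := ih (e :: post) σ (by simpa using hnd)
      (fun x hx => hpre x (by simp [hx]))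
      (fun e3 he3 hv hc => List.mem_cons_of_mem _ (hpost e3 he3 hv hc))
      (fun x hx e3 he3 hv hc => by simpa using hinv x (by simp [hx]) e3 he3 hv hc)
    have step : D.applySeq ((u ++ [e]) ++ a :: post) σ = D.applySeq (u ++ a :: e :: post) σ := by
      simp only [List.append_assoc, List.cons_append, List.nil_append,
        myapplySeq_append, myapplySeq_cons]
      exact hswap _
    rw [step, ihh]
    congr 1
    simp

theorem myMain (hnc : RcNonComm D) (hcc : CondComm D) :
    ∀ l1 l2 : List (Event T R O), l1.Nodup → l2.Nodup →
    (∀ e, e ∈ l1 ↔ e ∈ l2) → (∀ e ∈ l1, e ∈ C.events) →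
    (∀ e e', lo D C e e' → e ∈ l1 → e' ∈ l1 → precedes l1 e e') →
    (∀ e e', lo D C e e' → e ∈ l2 → e' ∈ l2 → precedes l2 e e') →
    (∀ e ∈ l1, ∀ e', lo D C e e' → e' ∈ l1) →
    ∀ σ, D.applySeq l1 σ = D.applySeq l2 σ := by
  intro l1
  induction l1 with
  | nil =>
    intro l2 _ _ hm _ _ _ _ σ
    have h0 : l2 = [] := List.eq_nil_iff_forall_not_mem.mpr
      (fun e he => by simpa using (hm e).mpr he)
    subst h0; rfl
  | cons a t1 ih =>
    intro l2 h1n h2n hm hev ext1 ext2 hcl σ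
    obtain ⟨hat1, ht1n⟩ := List.nodup_cons.mp h1n
    have hal2 : a ∈ l2 := (hm a).mp (by simp)
    obtain ⟨pre, post, rfl⟩ := List.append_of_mem hal2
    obtain ⟨hapre, hapost, hnd'⟩ := mynotmem h2n
    have hae : a ∈ C.events := hev a (by simp)
    have hpre : ∀ e ∈ pre, e ∈ C.events ∧ ¬ lo D C e a ∧ ¬ lo D C a e := by
      intro e hepre
      have hel2 : e ∈ pre ++ a :: post := by simp [hepre]
      have hel1 : e ∈ a :: t1 := (hm e).mpr hel2
      refine ⟨hev e hel1, ?_, ?_⟩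
      · intro hlo
        have hp := ext1 e a hlo hel1 (by simp)
        have hmem := mymem_left (u := ([] : List (Event T R O))) (by simpa using h1n)
          (by simpa using mysublist_of_precedes hp)
        simp at hmem
      · intro hlo
        have hp := ext2 a e hlo hal2 hel2
        have hmem := mymem_right h2n (mysublist_of_precedes hp)
        exact (List.nodup_append'.mp h2n).2.2 hepre (List.mem_cons_of_mem _ hmem)
    have hpost' : ∀ e3 ∈ C.events, C.vis a e3 → ¬ D.Commute a e3 → e3 ∈ post := by
      intro e3 he3 hv hc
      have hlo : lo D C a e3 := ⟨hae, he3, Or.inl ⟨hv, hc⟩⟩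
      have he3l2 : e3 ∈ pre ++ a :: post := (hm e3).mp (hcl a (by simp) e3 hlo)
      exact mymem_right h2n (mysublist_of_precedes (ext2 a e3 hlo hal2 he3l2))
    have hinv : ∀ x ∈ pre, ∀ e3 ∈ C.events, C.vis x e3 → ¬ D.Commute x e3 →
        [x, e3].Sublist (pre ++ post) := by
      intro x hx e3 he3 hv hc
      obtain ⟨hxe, hloxa, -⟩ := hpre x hx
      have hxa : x ≠ a := fun h => hapre (h ▸ hx)
      have hlo : lo D C x e3 := ⟨hxe, he3, Or.inl ⟨hv, hc⟩⟩
      have h3a : e3 ≠ a := fun h => hloxa (h ▸ hlo)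
      have hxl2 : x ∈ pre ++ a :: post := by simp [hx]
      have he3l2 := (hm e3).mp (hcl x ((hm x).mpr hxl2) e3 hlo)
      exact myerase_mid hxa h3a (mysublist_of_precedes (ext2 x e3 hlo hxl2 he3l2))
    have hb := mybubble D C hnc hcc hae pre post σ hnd' hpre hpost' hinv
    have hnotmem : a ∉ pre ++ post := by
      intro h; rcases List.mem_append.mp h with h | h
      · exact hapre h
      · exact hapost h
    have hmem' : ∀ e, e ∈ t1 ↔ e ∈ pre ++ post := by
      intro e
      constructor
      · intro he
        have hea : e ≠ a := fun h => hat1 (h ▸ he)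
        have h2 := (hm e).mp (by simp [he])
        rcases List.mem_append.mp h2 with h | h
        · exact List.mem_append.mpr (Or.inl h)
        · rcases List.mem_cons.mp h with h | h
          · exact absurd h hea
          · exact List.mem_append.mpr (Or.inr h)
      · intro he
        have hea : e ≠ a := fun h => hnotmem (h ▸ he)
        have hl2 : e ∈ pre ++ a :: post := by
          rcases List.mem_append.mp he with h | h
          · simp [h]
          · simp [h]
        rcases List.mem_cons.mp ((hm e).mpr hl2) with h | h
        · exact absurd h hea
        · exact h
    have ext1' : ∀ e e', lo D C e e' → e ∈ t1 → e' ∈ t1 → precedes t1 e e' := by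
      intro e e' hlo he he'
      have hs := mysublist_of_precedes (ext1 e e' hlo (by simp [he]) (by simp [he']))
      cases hs with
      | cons _ h' => exact myprecedes_of_sublist h'
      | cons_cons _ h' => exact absurd he hat1
    have ext2' : ∀ e e', lo D C e e' → e ∈ pre ++ post → e' ∈ pre ++ post →
        precedes (pre ++ post) e e' := by
      intro e e' hlo he he'
      have hea : e ≠ a := fun h => hnotmem (h ▸ he)
      have he'a : e' ≠ a := fun h => hnotmem (h ▸ he')
      have hel2 : e ∈ pre ++ a :: post := by
        rcases List.mem_append.mp he with h | h <;> simp [h]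
      have he'l2 : e' ∈ pre ++ a :: post := by
        rcases List.mem_append.mp he' with h | h <;> simp [h]
      exact myprecedes_of_sublist
        (myerase_mid hea he'a (mysublist_of_precedes (ext2 e e' hlo hel2 he'l2)))
    have hcl' : ∀ e ∈ t1, ∀ e', lo D C e e' → e' ∈ t1 := by
      intro e he e' hlo
      rcases List.mem_cons.mp (hcl e (by simp [he]) e' hlo) with h | h
      · subst h
        have hp := ext1 e e' hlo (by simp [he]) (by simp)
        have hmem := mymem_left (u := ([] : List (Event T R O))) (by simpa using h1n)
          (by simpa using mysublist_of_precedes hp)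
        simp at hmem
      · exact h
    have ihh := ih (pre ++ post) ht1n hnd' hmem' (fun e he => hev e (by simp [he]))
      ext1' ext2' hcl' (D.applyEvent a σ)
    rw [myapplySeq_cons, ihh, hb]

end ConvHelpers

/-- if `D` satisfies rc-non-comm and cond-comm, then for every
reachable configuration `C`, any two sequences enumerating `E_C` exactly once
and extending `lo_C` produce the same state from any starting state. -/
theorem convergence (T R O : Type) [DecidableEq T] [DecidableEq R] [DecidableEq O]
    (D : MRDT T R O)
    (hnc : RcNonComm D) (hcc : CondComm D)
    (C : Config T R O D.State) (hC : Reachable D C)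
    (π1 π2 : List (Event T R O))
    (h1n : π1.Nodup) (h1m : ∀ e, e ∈ π1 ↔ e ∈ C.events)
    (h1e : ∀ e e', lo D C e e' → e ∈ π1 → e' ∈ π1 → precedes π1 e e')
    (h2n : π2.Nodup) (h2m : ∀ e, e ∈ π2 ↔ e ∈ C.events)
    (h2e : ∀ e e', lo D C e e' → e ∈ π2 → e' ∈ π2 → precedes π2 e e')
    (σ : D.State) :
    D.applySeq π1 σ = D.applySeq π2 σ := by
  exact myMain D C hnc hcc π1 π2 h1n h2n (fun e => (h1m e).trans (h2m e).symm)
    (fun e he => (h1m e).mp he) h1e h2e (fun e he e' hlo => (h1m e').mpr hlo.2.1) σ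
end

section
/- Under the merge scenario described in the context (D satisfying rc-non-comm, cond-comm and no-rc-chain, a reachable configuration C and a Merge transition C → C' with event set L⊤ᵃ and relation lo_m): for all events e, e' ∈ L⊤ᵃ, it is not the case that e →lo_m e'. -/
variable {T R O : Type}

variable [DecidableEq T] [DecidableEq R] [DecidableEq O]

/-- Reachability invariant: if `vis e1 e2` then `e2` is an event of `C`, and
every live version whose log contains `e2` also contains `e1`. -/
theorem vis_invariant (D : MRDT T R O) (C : Config T R O D.State) (hC : Reachable D C) :
    ∀ e1 e2, C.vis e1 e2 → e2 ∈ C.events ∧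
      ∀ u, ((C.N u).isSome → e2 ∈ C.L u → e1 ∈ C.L u) := by
  obtain ⟨r0, h⟩ := hC
  induction h with
  | refl => intro e1 e2 hvis; exact absurd hvis (by simp [initConfig])
  | tail hsteps hstep ih =>
    cases hstep with
    | createBranch r r' vr v σ hr hσ hr' hv =>
      intro e1 e2 hvis
      obtain ⟨⟨w, hw1, hw2⟩, hall⟩ := ih e1 e2 hvis
      have hwv : w ≠ v := by rintro rfl; rw [hv] at hw1; simp at hw1
      constructor
      · exact ⟨w, by simpa [branchConfig, Function.update_of_ne hwv] using ⟨hw1, hw2⟩⟩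
      · intro u hu h2
        by_cases huv : u = v
        · subst huv
          simp only [branchConfig, Function.update_self] at h2 ⊢
          exact hall vr (by simp [hσ]) h2
        · simp only [branchConfig, Function.update_of_ne huv] at hu h2 ⊢
          exact hall u hu h2
    | applyOp t r o vr v σ hr hσ hv ht =>
      intro e1 e2 hvis
      rcases hvis with hvis | ⟨h1vr, rfl⟩
      · obtain ⟨⟨w, hw1, hw2⟩, hall⟩ := ih e1 e2 hvis
        have h2t : e2.1 ≠ t := ht e2 ⟨w, hw1, hw2⟩
        have hwv : w ≠ v := by rintro rfl; rw [hv] at hw1; simp at hw1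
        constructor
        · exact ⟨w, by simpa [applyConfig, Function.update_of_ne hwv] using ⟨hw1, hw2⟩⟩
        · intro u hu h2
          by_cases huv : u = v
          · subst huv
            simp only [applyConfig, Function.update_self, Finset.mem_insert] at h2 ⊢
            rcases h2 with h2 | h2
            · exact absurd (by rw [h2]) h2t
            · exact Or.inr (hall vr (by simp [hσ]) h2)
          · simp only [applyConfig, Function.update_of_ne huv] at hu h2 ⊢
            exact hall u hu h2
      · constructor
        · exact ⟨v, by simp [applyConfig]⟩
        · intro u hu h2
          by_cases huv : u = v
          · subst huv
            simp only [applyConfig, Function.update_self, Finset.mem_insert]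
            exact Or.inr h1vr
          · simp only [applyConfig, Function.update_of_ne huv] at hu h2 ⊢
            exact absurd rfl (ht (t, r, o) ⟨u, hu, h2⟩)
    | mergeOp r1 r2 v1 v2 vt v σ1 σ2 σt h1 h2 hσ1 hσ2 hσt hlca hv =>
      intro e1 e2 hvis
      obtain ⟨⟨w, hw1, hw2⟩, hall⟩ := ih e1 e2 hvis
      have hwv : w ≠ v := by rintro rfl; rw [hv] at hw1; simp at hw1
      constructor
      · exact ⟨w, by simpa [mergeConfig, Function.update_of_ne hwv] using ⟨hw1, hw2⟩⟩
      · intro u hu h2e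
        by_cases huv : u = v
        · subst huv
          simp only [mergeConfig, Function.update_self, Finset.mem_union] at h2e ⊢
          rcases h2e with h2e | h2e
          · exact Or.inl (hall v1 (by simp [hσ1]) h2e)
          · exact Or.inr (hall v2 (by simp [hσ2]) h2e)
        · simp only [mergeConfig, Function.update_of_ne huv] at hu h2e ⊢
          exact hall u hu h2e
    | queryOp => exact ih

/-- in the merge scenario, `lo_m` does not relate any two events
of `L⊤ᵃ`. -/
theorem no_lom_within_LtA (T R O : Type) [DecidableEq T] [DecidableEq R] [DecidableEq O]
    (D : MRDT T R O)
    (hnc : RcNonComm D) (hcc : CondComm D) (hchain : NoRcChain D)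
    (C : Config T R O D.State) (hC : Reachable D C)
    (r1 r2 : R) (v1 v2 vt v : ℕ) (σ1 σ2 σt : D.State)
    (h1 : C.H r1 = some v1) (h2 : C.H r2 = some v2)
    (hσ1 : C.N v1 = some σ1) (hσ2 : C.N v2 = some σ2) (hσt : C.N vt = some σt)
    (hlca : isLCA (fun u => (C.N u).isSome) C.E v1 v2 vt)
    (hv : C.N v = none)
    (C' : Config T R O D.State)
    (hC' : C' = mergeConfig D C r1 v1 v2 vt v σt σ1 σ2)
    (L1 L2 Lt : Finset (Event T R O))
    (hL1 : L1 = C.L v1) (hL2 : L2 = C.L v2) (hLt : Lt = C.L vt)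
    (lom : Event T R O → Event T R O → Prop)
    (hlom : lom = fun e1 e2 => lo D C' e1 e2 ∧ e1 ∈ L1 ∪ L2 ∧ e2 ∈ L1 ∪ L2)
    (L1' L2' : Finset (Event T R O))
    (hL1' : L1' = L1 \ Lt) (hL2' : L2' = L2 \ Lt)
    (L1b L2b : Set (Event T R O))
    (hL1b : L1b = {e | e ∈ L1' ∧ ∃ et ∈ Lt,
      (lom e et ∨ ∃ e' ∈ L1', lom e e' ∧ lom e' et)})
    (hL2b : L2b = {e | e ∈ L2' ∧ ∃ et ∈ Lt,
      (lom e et ∨ ∃ e' ∈ L2', lom e e' ∧ lom e' et)})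
    (LtA : Set (Event T R O))
    (hLtA : LtA = {et | et ∈ Lt ∧ ∃ e ∈ L1b ∪ L2b, lom e et})
    (L1a L2a LtB : Set (Event T R O))
    (hL1a : L1a = {e | e ∈ L1' ∧ e ∉ L1b})
    (hL2a : L2a = {e | e ∈ L2' ∧ e ∉ L2b})
    (hLtB : LtB = {et | et ∈ Lt ∧ et ∉ LtA})
    : ∀ e ∈ LtA, ∀ e' ∈ LtA, ¬ lom e e' := by
  subst hC' hL1 hL2 hLt hL1' hL2' hL1b hL2b hLtA hlom
  have hinv := vis_invariant D C hC
  intro e he e' he' hee'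
  obtain ⟨heLt, f, hf, hfe⟩ := he
  obtain ⟨he'Lt, -⟩ := he'
  -- f ∉ C.L vt
  have hfnt : f ∉ C.L vt := by
    rcases hf with hf | hf
    · exact (Finset.mem_sdiff.mp hf.1).2
    · exact (Finset.mem_sdiff.mp hf.1).2
  obtain ⟨⟨hfE, heE, hfcase⟩, -, -⟩ := hfe
  obtain ⟨⟨heE', he'E, hcase⟩, -, -⟩ := hee'
  have hvtSome : (C.N vt).isSome := by simp [hσt]
  rcases hfcase with ⟨hvisfe, -⟩ | ⟨-, -, hrcfe, hno3⟩
  · -- vis f e with e ∈ Lt forces f ∈ Lt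
    have : C.vis f e := hvisfe
    exact hfnt ((hinv f e this).2 vt hvtSome heLt)
  · rcases hcase with ⟨hvisee', hnc⟩ | ⟨-, -, hrcee', -⟩
    · exact hno3 ⟨e', he'E, hvisee', hnc⟩
    · exact hchain ⟨f.2.2, e.2.2, e'.2.2, hrcfe, hrcee'⟩
end

section
/- For every MRDT implementation D and every reachable configuration C = (N,H,L,G,vis): every version is causally closed, i.e. for all v ∈ dom(N) and events e₁, e₂, if (e₁,e₂) ∈ vis and e₂ ∈ L(v), then e₁ ∈ L(v). -/
variable {T R O : Type}

variable [DecidableEq T] [DecidableEq R] [DecidableEq O]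

/-- The inductive invariant: causal closure of every live version, plus the fact that
`vis` only relates events to events that occur somewhere in the configuration. -/
def CausalInv (D : MRDT T R O) (C : Config T R O D.State) : Prop :=
  (∀ v, (C.N v).isSome → ∀ e1 e2 : Event T R O, C.vis e1 e2 → e2 ∈ C.L v → e1 ∈ C.L v) ∧
  (∀ e1 e2 : Event T R O, C.vis e1 e2 → e2 ∈ C.events)

lemma causalInv_step {D : MRDT T R O} {C C' : Config T R O D.State}
    (h : Step D C C') (hI : CausalInv D C) : CausalInv D C' := by
  obtain ⟨h1, h2⟩ := hI
  cases h with
  | createBranch r r' vr v σ hr hσ hr' hv =>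
    constructor
    · intro u hu e1 e2 hvis he2
      by_cases huv : u = v
      · subst huv
        simp only [branchConfig, Function.update_self] at he2 ⊢
        exact h1 vr (by rw [hσ]; rfl) e1 e2 hvis he2
      · simp only [branchConfig, Function.update_of_ne huv] at he2 hu ⊢
        exact h1 u hu e1 e2 hvis he2
    · intro e1 e2 hvis
      obtain ⟨u, hu, he⟩ := h2 e1 e2 hvis
      have huv : u ≠ v := by rintro rfl; rw [hv] at hu; simp at hu
      exact ⟨u, by simpa [branchConfig, Function.update_of_ne huv] using hu,
        by simpa [branchConfig, Function.update_of_ne huv] using he⟩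
  | applyOp t r o vr v σ hr hσ hv ht =>
    constructor
    · intro u hu e1 e2 hvis he2
      by_cases huv : u = v
      · subst huv
        simp only [applyConfig, Function.update_self, Finset.mem_insert] at he2 ⊢
        rcases hvis with hvis | ⟨he1, rfl⟩
        · rcases he2 with rfl | he2
          · exact absurd rfl (ht _ (h2 e1 _ hvis))
          · exact Or.inr (h1 vr (by rw [hσ]; rfl) e1 e2 hvis he2)
        · exact Or.inr he1
      · simp only [applyConfig, Function.update_of_ne huv] at he2 hu ⊢
        rcases hvis with hvis | ⟨he1, rfl⟩
        · exact h1 u hu e1 e2 hvis he2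
        · exact absurd rfl (ht _ ⟨u, hu, he2⟩)
    · intro e1 e2 hvis
      rcases hvis with hvis | ⟨he1, rfl⟩
      · obtain ⟨u, hu, he⟩ := h2 e1 e2 hvis
        have huv : u ≠ v := by rintro rfl; rw [hv] at hu; simp at hu
        exact ⟨u, by simpa [applyConfig, Function.update_of_ne huv] using hu,
          by simpa [applyConfig, Function.update_of_ne huv] using he⟩
      · exact ⟨v, by simp [applyConfig], by simp [applyConfig]⟩
  | mergeOp r1 r2 v1 v2 vt v σ1 σ2 σt hh1 hh2 hσ1 hσ2 hσt hlca hv =>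
    constructor
    · intro u hu e1 e2 hvis he2
      by_cases huv : u = v
      · subst huv
        simp only [mergeConfig, Function.update_self, Finset.mem_union] at he2 ⊢
        rcases he2 with he2 | he2
        · exact Or.inl (h1 v1 (by rw [hσ1]; rfl) e1 e2 hvis he2)
        · exact Or.inr (h1 v2 (by rw [hσ2]; rfl) e1 e2 hvis he2)
      · simp only [mergeConfig, Function.update_of_ne huv] at he2 hu ⊢
        exact h1 u hu e1 e2 hvis he2
    · intro e1 e2 hvis
      obtain ⟨u, hu, he⟩ := h2 e1 e2 hvis
      have huv : u ≠ v := by rintro rfl; rw [hv] at hu; simp at hu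
      exact ⟨u, by simpa [mergeConfig, Function.update_of_ne huv] using hu,
        by simpa [mergeConfig, Function.update_of_ne huv] using he⟩
  | queryOp => exact ⟨h1, h2⟩

/-- every version of a reachable configuration is causally closed. -/
theorem versions_causally_closed (T R O : Type) [DecidableEq T] [DecidableEq R] [DecidableEq O]
    (D : MRDT T R O) (C : Config T R O D.State) (hC : Reachable D C) :
    ∀ v, (C.N v).isSome →
      ∀ e1 e2 : Event T R O, C.vis e1 e2 → e2 ∈ C.L v → e1 ∈ C.L v := by
  obtain ⟨r0, hsteps⟩ := hC
  have hinv : CausalInv D C := by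
    induction hsteps with
    | refl => exact ⟨fun v _ e1 e2 h _ => h.elim, fun e1 e2 h => h.elim⟩
    | tail _ hstep ih => exact causalInv_step hstep ih
  exact hinv.1
end

section
/- For every MRDT implementation D and every reachable configuration C = (N,H,L,G,vis), the relation vis is a strict partial order on E_C: it is irreflexive and transitive (hence its transitive closure is irreflexive). -/
variable {T R O : Type}

variable [DecidableEq T] [DecidableEq R] [DecidableEq O]

/-- Auxiliary invariant: `vis` relates events of `C` with distinct timestamps,
is transitive, and event logs are downward `vis`-closed. -/
def VisInv {S : Type} (C : Config T R O S) : Prop :=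
  (∀ e1 e2, C.vis e1 e2 → e1 ∈ C.events ∧ e2 ∈ C.events ∧ e1.1 ≠ e2.1) ∧
  (∀ e1 e2 e3, C.vis e1 e2 → C.vis e2 e3 → C.vis e1 e3) ∧
  (∀ v, (C.N v).isSome → ∀ e1 e2, C.vis e1 e2 → e2 ∈ C.L v → e1 ∈ C.L v)

lemma mem_events_aux {S : Type} {C : Config T R O S} {v : ℕ} {e : Event T R O}
    (h : (C.N v).isSome) (he : e ∈ C.L v) : e ∈ C.events := ⟨v, h, he⟩

lemma visInv_step [DecidableEq T] [DecidableEq R] [DecidableEq O]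
    {D : MRDT T R O} {C C' : Config T R O D.State}
    (h : Step D C C') (hI : VisInv C) : VisInv C' := by
  obtain ⟨ha, hb, hc⟩ := hI
  cases h with
  | createBranch r r' vr v σ hr hσ hr' hv =>
    have hev : ∀ e, e ∈ (branchConfig D C r' vr v σ).events ↔ e ∈ C.events := by
      intro e
      constructor
      · rintro ⟨u, hu, he⟩
        by_cases huv : u = v
        · subst huv
          simp only [branchConfig, Function.update_self] at he
          exact ⟨vr, by simp [hσ], he⟩
        · simp only [branchConfig, Function.update_of_ne huv] at hu he
          exact ⟨u, hu, he⟩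
      · rintro ⟨u, hu, he⟩
        have huv : u ≠ v := by rintro rfl; simp [hv] at hu
        refine ⟨u, ?_, ?_⟩
        · simpa [branchConfig, Function.update_of_ne huv] using hu
        · simpa [branchConfig, Function.update_of_ne huv] using he
    refine ⟨?_, hb, ?_⟩
    · intro e1 e2 hvis
      obtain ⟨h1, h2, h3⟩ := ha e1 e2 hvis
      exact ⟨(hev e1).2 h1, (hev e2).2 h2, h3⟩
    · intro u hu e1 e2 hvis he2
      by_cases huv : u = v
      · subst huv
        simp only [branchConfig, Function.update_self] at he2 ⊢
        exact hc vr (by simp [hσ]) e1 e2 hvis he2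
      · simp only [branchConfig, Function.update_of_ne huv] at hu he2 ⊢
        exact hc u hu e1 e2 hvis he2
  | applyOp t r o vr v σ hr hσ hv ht =>
    have hvrS : (C.N vr).isSome := by simp [hσ]
    have hfresh : (t, r, o) ∉ C.events := fun hmem => ht (t, r, o) hmem rfl
    have hev : ∀ e, e ∈ (applyConfig D C t r o vr v σ).events ↔
        e ∈ C.events ∨ e = (t, r, o) := by
      intro e
      constructor
      · rintro ⟨u, hu, he⟩
        by_cases huv : u = v
        · subst huv
          simp only [applyConfig, Function.update_self, Finset.mem_insert] at he
          rcases he with he | he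
          · exact Or.inr he
          · exact Or.inl ⟨vr, hvrS, he⟩
        · simp only [applyConfig, Function.update_of_ne huv] at hu he
          exact Or.inl ⟨u, hu, he⟩
      · rintro (⟨u, hu, he⟩ | rfl)
        · have huv : u ≠ v := by rintro rfl; simp [hv] at hu
          refine ⟨u, ?_, ?_⟩
          · simpa [applyConfig, Function.update_of_ne huv] using hu
          · simpa [applyConfig, Function.update_of_ne huv] using he
        · exact ⟨v, by simp [applyConfig], by simp [applyConfig]⟩
    refine ⟨?_, ?_, ?_⟩
    · rintro e1 e2 (hvis | ⟨h1, rfl⟩)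
      · obtain ⟨h1, h2, h3⟩ := ha e1 e2 hvis
        exact ⟨(hev e1).2 (Or.inl h1), (hev e2).2 (Or.inl h2), h3⟩
      · exact ⟨(hev e1).2 (Or.inl (mem_events_aux hvrS h1)),
          (hev (t, r, o)).2 (Or.inr rfl), ht e1 (mem_events_aux hvrS h1)⟩
    · rintro e1 e2 e3 (h12 | ⟨h1, rfl⟩) h23
      · rcases h23 with h23 | ⟨h2, rfl⟩
        · exact Or.inl (hb e1 e2 e3 h12 h23)
        · exact Or.inr ⟨hc vr hvrS e1 e2 h12 h2, rfl⟩
      · rcases h23 with h23 | ⟨h2, rfl⟩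
        · exact absurd (ha _ _ h23).1 hfresh
        · exact absurd (mem_events_aux hvrS h2) hfresh
    · intro u hu e1 e2 hvis he2
      by_cases huv : u = v
      · subst huv
        simp only [applyConfig, Function.update_self, Finset.mem_insert] at he2 ⊢
        rcases hvis with hvis | ⟨h1, rfl⟩
        · rcases he2 with rfl | he2
          · exact absurd (ha _ _ hvis).2.1 hfresh
          · exact Or.inr (hc vr hvrS e1 e2 hvis he2)
        · exact Or.inr h1
      · simp only [applyConfig, Function.update_of_ne huv] at hu he2 ⊢
        rcases hvis with hvis | ⟨h1, rfl⟩
        · exact hc u hu e1 e2 hvis he2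
        · exact absurd (mem_events_aux hu he2) hfresh
  | mergeOp r1 r2 v1 v2 vt v σ1 σ2 σt h1 h2 hσ1 hσ2 hσt hlca hv =>
    have h1S : (C.N v1).isSome := by simp [hσ1]
    have h2S : (C.N v2).isSome := by simp [hσ2]
    have hev : ∀ e, e ∈ (mergeConfig D C r1 v1 v2 vt v σt σ1 σ2).events ↔
        e ∈ C.events := by
      intro e
      constructor
      · rintro ⟨u, hu, he⟩
        by_cases huv : u = v
        · subst huv
          simp only [mergeConfig, Function.update_self, Finset.mem_union] at he
          rcases he with he | he
          · exact ⟨v1, h1S, he⟩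
          · exact ⟨v2, h2S, he⟩
        · simp only [mergeConfig, Function.update_of_ne huv] at hu he
          exact ⟨u, hu, he⟩
      · rintro ⟨u, hu, he⟩
        have huv : u ≠ v := by rintro rfl; simp [hv] at hu
        refine ⟨u, ?_, ?_⟩
        · simpa [mergeConfig, Function.update_of_ne huv] using hu
        · simpa [mergeConfig, Function.update_of_ne huv] using he
    refine ⟨?_, hb, ?_⟩
    · intro e1 e2 hvis
      obtain ⟨ha1, ha2, ha3⟩ := ha e1 e2 hvis
      exact ⟨(hev e1).2 ha1, (hev e2).2 ha2, ha3⟩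
    · intro u hu e1 e2 hvis he2
      by_cases huv : u = v
      · subst huv
        simp only [mergeConfig, Function.update_self, Finset.mem_union] at he2 ⊢
        rcases he2 with he2 | he2
        · exact Or.inl (hc v1 h1S e1 e2 hvis he2)
        · exact Or.inr (hc v2 h2S e1 e2 hvis he2)
      · simp only [mergeConfig, Function.update_of_ne huv] at hu he2 ⊢
        exact hc u hu e1 e2 hvis he2
  | queryOp => exact ⟨ha, hb, hc⟩

lemma visInv_init [DecidableEq T] [DecidableEq R] [DecidableEq O]
    (D : MRDT T R O) (r0 : R) : VisInv (initConfig D r0) :=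
  ⟨fun _ _ h => h.elim, fun _ _ _ h => h.elim, fun _ _ _ _ h => h.elim⟩

/-- in a reachable configuration, `vis` is a strict partial order:
irreflexive and transitive (hence its transitive closure is irreflexive). -/
theorem vis_strict_partial_order (T R O : Type) [DecidableEq T] [DecidableEq R] [DecidableEq O]
    (D : MRDT T R O) (C : Config T R O D.State) (hC : Reachable D C) :
    (∀ e : Event T R O, ¬ C.vis e e) ∧
      (∀ e1 e2 e3 : Event T R O, C.vis e1 e2 → C.vis e2 e3 → C.vis e1 e3) ∧
      (∀ e : Event T R O, ¬ Relation.TransGen C.vis e e) := by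
  obtain ⟨r0, hsteps⟩ := hC
  have hInv : VisInv C := by
    induction hsteps with
    | refl => exact visInv_init D r0
    | tail _ hstep ih => exact visInv_step hstep ih
  have hirr : ∀ e : Event T R O, ¬ C.vis e e :=
    fun e h => (hInv.1 e e h).2.2 rfl
  have htr := hInv.2.1
  refine ⟨hirr, htr, fun e h => hirr e ?_⟩
  rwa [@Relation.transGen_eq_self _ _ ⟨fun a b c => htr a b c⟩] at h
end
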